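/- arXiv:2407.01345 — 2 statements merged into one kernel-verified Lean document; each statement's English description precedes it below -/
import Mathlib

section
/- Let ν ∈ ℝ, a ∈ ℂ \ {0} and m ∈ ℕ. The transform κ_{-1,-ν} intertwines the operators E⁻_{a,m} and -E⁻_{-a,m}: for every twice differentiable f : (0,∞) → ℂ and every r > 0, κ_{-1,-ν}(E⁻_{a,m} f)(r) = -E⁻_{-a,m}(κ_{-1,-ν} f)(r), where (E⁻_{a,m} f)(r) = (i/a) r^{-a} (r² f''(r) + (ν + 1) r f'(r) - m(ν + m) f(r)) and (E⁻_{-a,m} g)(r) = (i/(-a)) r^{a} (r² g''(r) + (ν + 1) r g'(r) - m(ν + m) g(r)). -/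
/-!
With `ϑ = r d/dr`, the weighted inversion `κ = κ_{-1,-ν}` satisfies `κ ϑ = -(ϑ + ν) κ`, and the
second-order part `ϑ² + νϑ = (ϑ - m)(ϑ + ν + m) + m(ν + m)` of `E⁻_{a,m}` is invariant under
`ϑ ↦ -ϑ - ν`, so it commutes with `κ`. The remaining factor `r^{-a}` becomes `r^{a}` under
`r ↦ 1/r`, which is `E⁻_{-a,m}` up to the sign of `i/a`.
-/

open Real Complex

/-- The transform `κ_{α,β}` acting on functions on `(0,∞)`:
`(κ_{α,β} f)(r) = r^β f(r^α)`; in particular `(κ_{-1,-ν} f)(r) = r^{-ν} f(1/r)`. -/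
noncomputable def kappa (α β : ℝ) (f : ℝ → ℂ) (r : ℝ) : ℂ :=
  ((r ^ β : ℝ) : ℂ) * f (r ^ α)

/-- The operator `E⁻_{a,m} = (i/a) r^{-a} (ϑ - m)(ϑ + ν + m)`:
`(E⁻_{a,m} f)(r) = (i/a) r^{-a} (r² f''(r) + (ν+1) r f'(r) - m(ν+m) f(r))`,
where `r^{-a}` is the complex power of the positive real `r`. -/
noncomputable def Eminus (ν : ℝ) (a : ℂ) (m : ℕ) (f : ℝ → ℂ) (r : ℝ) : ℂ :=
  Complex.I / a * (r : ℂ) ^ (-a) *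
    ((r : ℂ) ^ 2 * deriv (deriv f) r + ((ν : ℂ) + 1) * (r : ℂ) * deriv f r
      - (m : ℂ) * ((ν : ℂ) + (m : ℂ)) * f r)

open Filter Topology

noncomputable def euler (f : ℝ → ℂ) (r : ℝ) : ℂ :=
  (r : ℂ) * deriv f r

/-- `(ϑ - m)(ϑ + ν + m) f`, written out. -/
noncomputable def radialOp (ν : ℝ) (m : ℕ) (f : ℝ → ℂ) (r : ℝ) : ℂ :=
  (r : ℂ) ^ 2 * deriv (deriv f) r + ((ν : ℂ) + 1) * (r : ℂ) * deriv f r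
    - (m : ℂ) * ((ν : ℂ) + (m : ℂ)) * f r

theorem Eminus_eq_radialOp (ν : ℝ) (a : ℂ) (m : ℕ) (f : ℝ → ℂ) (r : ℝ) :
    Eminus ν a m f r = Complex.I / a * (r : ℂ) ^ (-a) * radialOp ν m f r :=
  rfl

theorem kappa_neg_one_apply (β : ℝ) (f : ℝ → ℂ) (r : ℝ) :
    kappa (-1) β f r = ((r ^ β : ℝ) : ℂ) * f r⁻¹ := by
  rw [kappa, Real.rpow_neg_one]

theorem ofReal_inv_cpow_neg {r : ℝ} (hr : 0 < r) (a : ℂ) :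
    ((r⁻¹ : ℝ) : ℂ) ^ (-a) = (r : ℂ) ^ a := by
  have harg : (r : ℂ).arg ≠ π := by
    rw [Complex.arg_ofReal_of_nonneg hr.le]
    exact Real.pi_ne_zero.symm
  rw [Complex.ofReal_inv, Complex.inv_cpow _ _ harg, Complex.cpow_neg, inv_inv]

section Euler

variable {f g : ℝ → ℂ} {r : ℝ}

theorem differentiableAt_euler (hf : DifferentiableAt ℝ (deriv f) r) :
    DifferentiableAt ℝ (euler f) r :=
  Complex.ofRealCLM.differentiableAt.mul hf

theorem euler_const_mul_sub (c : ℂ) (hf : DifferentiableAt ℝ f r) (hg : DifferentiableAt ℝ g r) :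
    euler (fun x => c * f x - g x) r = c * euler f r - euler g r := by
  simp only [euler, deriv_fun_sub (hf.const_mul c) hg, deriv_const_mul c hf]
  ring

theorem euler_euler (hf : DifferentiableAt ℝ (deriv f) r) :
    euler (euler f) r = (r : ℂ) ^ 2 * deriv (deriv f) r + euler f r := by
  have h : HasDerivAt (euler f) (1 * deriv f r + (r : ℂ) * deriv (deriv f) r) r :=
    Complex.ofRealCLM.hasDerivAt.mul hf.hasDerivAt
  rw [euler, h.deriv, euler]
  ring

/-- Away from `0`, `f'` is `ϑ f / r`, so it inherits the differentiability of `ϑ f`. -/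
theorem differentiableAt_deriv_of_euler (hr : r ≠ 0) (hf : DifferentiableAt ℝ (euler f) r) :
    DifferentiableAt ℝ (deriv f) r := by
  have heq : (fun x : ℝ => ((x : ℂ))⁻¹ * euler f x) =ᶠ[𝓝 r] deriv f := by
    filter_upwards [eventually_ne_nhds hr] with x hx
    rw [euler, inv_mul_cancel_left₀ (Complex.ofReal_ne_zero.2 hx)]
  refine DifferentiableAt.congr_of_eventuallyEq ?_ heq.symm
  exact (Complex.ofRealCLM.differentiableAt.inv (Complex.ofReal_ne_zero.2 hr)).mul hf

theorem radialOp_eq_euler (ν : ℝ) (m : ℕ) (hf : DifferentiableAt ℝ (deriv f) r) :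
    radialOp ν m f r = euler (euler f) r + ν * euler f r - m * (ν + m) * f r := by
  rw [radialOp, euler_euler hf, euler]
  ring

end Euler

section Inversion

variable {β : ℝ} {f : ℝ → ℂ} {r : ℝ}

theorem hasDerivAt_kappa_neg_one (hr : 0 < r) (hf : DifferentiableAt ℝ f r⁻¹) :
    HasDerivAt (kappa (-1) β f)
      (((β * r ^ (β - 1) : ℝ) : ℂ) * f r⁻¹
        + ((r ^ β : ℝ) : ℂ) * ((-(r ^ 2)⁻¹ : ℝ) • deriv f r⁻¹)) r := by
  rw [show kappa (-1) β f = fun x => ((x ^ β : ℝ) : ℂ) * f x⁻¹ from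
    funext (kappa_neg_one_apply β f)]
  exact (Real.hasDerivAt_rpow_const (Or.inl hr.ne')).ofReal_comp.mul
    (hf.hasDerivAt.scomp r (hasDerivAt_inv hr.ne'))

theorem differentiableAt_kappa_neg_one (hr : 0 < r) (hf : DifferentiableAt ℝ f r⁻¹) :
    DifferentiableAt ℝ (kappa (-1) β f) r :=
  (hasDerivAt_kappa_neg_one hr hf).differentiableAt

theorem euler_kappa_neg_one (hr : 0 < r) (hf : DifferentiableAt ℝ f r⁻¹) :
    euler (kappa (-1) β f) r = β * kappa (-1) β f r - kappa (-1) β (euler f) r := by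
  have hr0 : (r : ℂ) ≠ 0 := Complex.ofReal_ne_zero.2 hr.ne'
  have hpow : ((r ^ (β - 1) : ℝ) : ℂ) = ((r ^ β : ℝ) : ℂ) * (r : ℂ)⁻¹ := by
    rw [Real.rpow_sub_one hr.ne', Complex.ofReal_div, div_eq_mul_inv]
  rw [euler, (hasDerivAt_kappa_neg_one hr hf).deriv, kappa_neg_one_apply, kappa_neg_one_apply,
    euler, Complex.real_smul, Complex.ofReal_mul, hpow]
  push_cast
  field_simp
  ring

theorem euler_kappa_neg_one_eventuallyEq (hr : 0 < r) (hf : ∀ᶠ s in 𝓝 r⁻¹, DifferentiableAt ℝ f s) :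
    euler (kappa (-1) β f) =ᶠ[𝓝 r] fun x => β * kappa (-1) β f x - kappa (-1) β (euler f) x := by
  have hinv : Tendsto (fun x : ℝ => x⁻¹) (𝓝 r) (𝓝 r⁻¹) :=
    (continuousAt_inv₀ hr.ne').tendsto
  filter_upwards [eventually_gt_nhds hr, hinv.eventually hf] with x hx hfx
  exact euler_kappa_neg_one hx hfx

variable (hr : 0 < r) (hf : ∀ᶠ s in 𝓝 r⁻¹, DifferentiableAt ℝ f s)
  (hf' : DifferentiableAt ℝ (deriv f) r⁻¹)
include hr hf hf'

theorem differentiableAt_deriv_kappa_neg_one :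
    DifferentiableAt ℝ (deriv (kappa (-1) β f)) r := by
  refine differentiableAt_deriv_of_euler hr.ne' ?_
  refine DifferentiableAt.congr_of_eventuallyEq ?_ (euler_kappa_neg_one_eventuallyEq hr hf)
  exact ((differentiableAt_kappa_neg_one hr hf.self_of_nhds).const_mul _).sub
    (differentiableAt_kappa_neg_one hr (differentiableAt_euler hf'))

theorem euler_euler_kappa_neg_one :
    euler (euler (kappa (-1) β f)) r = β ^ 2 * kappa (-1) β f r
      - 2 * β * kappa (-1) β (euler f) r + kappa (-1) β (euler (euler f)) r := by
  have hdiff := differentiableAt_kappa_neg_one (β := β) hr hf.self_of_nhds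
  have hdiff' := differentiableAt_kappa_neg_one (β := β) hr (differentiableAt_euler hf')
  have hcongr : euler (euler (kappa (-1) β f)) r
      = euler (fun x => β * kappa (-1) β f x - kappa (-1) β (euler f) x) r :=
    congrArg ((r : ℂ) * ·) (euler_kappa_neg_one_eventuallyEq hr hf).deriv_eq
  rw [hcongr, euler_const_mul_sub _ hdiff hdiff', euler_kappa_neg_one hr hf.self_of_nhds,
    euler_kappa_neg_one hr (differentiableAt_euler hf')]
  ring

end Inversion

theorem radialOp_kappa_neg_one (ν : ℝ) (m : ℕ) {f : ℝ → ℂ} {r : ℝ} (hr : 0 < r)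
    (hf : ∀ᶠ s in 𝓝 r⁻¹, DifferentiableAt ℝ f s) (hf' : DifferentiableAt ℝ (deriv f) r⁻¹) :
    radialOp ν m (kappa (-1) (-ν) f) r = kappa (-1) (-ν) (radialOp ν m f) r := by
  rw [radialOp_eq_euler ν m (differentiableAt_deriv_kappa_neg_one hr hf hf'),
    euler_euler_kappa_neg_one hr hf hf', euler_kappa_neg_one hr hf.self_of_nhds]
  simp only [kappa_neg_one_apply, radialOp_eq_euler ν m hf']
  push_cast
  ring

theorem kappa_intertwines_Eminus_general (ν : ℝ) (a : ℂ) (m : ℕ) (f : ℝ → ℂ)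
    (hf : ∀ s : ℝ, 0 < s → DifferentiableAt ℝ f s)
    (hf' : ∀ s : ℝ, 0 < s → DifferentiableAt ℝ (deriv f) s)
    (r : ℝ) (hr : 0 < r) :
    kappa (-1) (-ν) (Eminus ν a m f) r = -(Eminus ν (-a) m (kappa (-1) (-ν) f) r) := by
  have hr' : 0 < r⁻¹ := inv_pos.2 hr
  have hrad := radialOp_kappa_neg_one ν m hr ((eventually_gt_nhds hr').mono hf) (hf' _ hr')
  rw [kappa_neg_one_apply, Eminus_eq_radialOp, ofReal_inv_cpow_neg hr, Eminus_eq_radialOp, hrad,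
    kappa_neg_one_apply, neg_neg, div_neg]
  ring

/-- `κ_{-1,-ν}` intertwines `E⁻_{a,m}` and `-E⁻_{-a,m}`: for every twice differentiable
`f : (0,∞) → ℂ` and every `r > 0`,
`κ_{-1,-ν}(E⁻_{a,m} f)(r) = -E⁻_{-a,m}(κ_{-1,-ν} f)(r)`. -/
theorem kappa_intertwines_Eminus (ν : ℝ) (a : ℂ) (ha : a ≠ 0) (m : ℕ) (f : ℝ → ℂ)
    (hf : ∀ s : ℝ, 0 < s → DifferentiableAt ℝ f s)
    (hf' : ∀ s : ℝ, 0 < s → DifferentiableAt ℝ (deriv f) s)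
    (r : ℝ) (hr : 0 < r) :
    kappa (-1) (-ν) (Eminus ν a m f) r = -(Eminus ν (-a) m (kappa (-1) (-ν) f) r) :=
  kappa_intertwines_Eminus_general ν a m f hf hf' r hr
end

section
/- Let ν ∈ ℝ, a > 0, m ∈ ℕ, λ = (ν + 2m)/a with λ > -1, and let f⁻_l(r) = (2^{λ+1} l! / (a^λ Γ(λ + l + 1)))^{1/2} r^{-(ν + m)} L_l^{(λ)}((2/a) r^{-a}) e^{-(1/a) r^{-a}}. Then for every l ∈ ℕ and r > 0, (1/(-a))( r^{-a} f⁻_l(r) - r^{a}( r² (f⁻_l)''(r) + (ν + 1) r (f⁻_l)'(r) - m(ν + m) f⁻_l(r) ) ) = (-λ - 2l - 1) f⁻_l(r); that is, f⁻_l is an eigenfunction of the operator π_{-a}(𝐤) = (1/(-a))(r^{-a} - r^{a}(ϑ - m)(ϑ + ν + m)) with eigenvalue λ_{k,-a,m} - 2l - 1, where λ_{k,-a,m} = -λ. -/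
/-!
With `ϑ = r d/dr` and the substitution `t = (2/a) r^{-a}` one has `ϑ = -a θ` for `θ = t d/dt`, and
conjugating by `r^{-(ν+m)}` turns `(ϑ - m)(ϑ + ν + m)` into `a² θ(θ + λ)`. The Laguerre equation
reads `θ(θ + λ) L = t (θ - l) L`, which on the monomial coefficients is the recurrence of the
Gamma quotients; for `G = L e^{-t/2}` it becomes `θ(θ + λ) G = t (t/4 - l - (λ+1)/2) G`. Since
`r^{-a} = a t / 2` and `r^a t = 2 / a`, the operator `(1/(-a))(r^{-a} - r^a (ϑ - m)(ϑ + ν + m))`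
acts on `r^{-(ν+m)} G(t)` as multiplication by `-λ - 2l - 1`.
-/

open Real

/-- The generalized Laguerre polynomial
`L_l^{(λ)}(t) = ∑_{j=0}^{l} ((-1)^j / (j!(l-j)!)) (Γ(λ+l+1)/Γ(λ+j+1)) t^j`. -/
noncomputable def laguerre (lam : ℝ) (l : ℕ) (t : ℝ) : ℝ :=
  ∑ j ∈ Finset.range (l + 1),
    (-1 : ℝ) ^ j / (j.factorial * (l - j).factorial) *
      (Real.Gamma (lam + l + 1) / Real.Gamma (lam + j + 1)) * t ^ j

/-- `f⁻_l(r) = (2^{λ+1} l!/(a^λ Γ(λ+l+1)))^{1/2} r^{-(ν+m)} L_l^{(λ)}((2/a) r^{-a})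
e^{-(1/a) r^{-a}}`. -/
noncomputable def laguerreFunNeg (ν a : ℝ) (m : ℕ) (l : ℕ) (r : ℝ) : ℂ :=
  ((Real.sqrt ((2 : ℝ) ^ ((ν + 2 * m) / a + 1) * l.factorial /
        (a ^ ((ν + 2 * m) / a) * Real.Gamma ((ν + 2 * m) / a + l + 1))) *
      r ^ (-(ν + m)) * laguerre ((ν + 2 * m) / a) l ((2 / a) * r ^ (-a)) *
      Real.exp (-(1 / a) * r ^ (-a)) : ℝ) : ℂ)

open Finset Filter Topology

noncomputable def laguerreCoeff (lam : ℝ) (l j : ℕ) : ℝ :=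
  (-1 : ℝ) ^ j / (j.factorial * (l - j).factorial) *
    (Real.Gamma (lam + l + 1) / Real.Gamma (lam + j + 1))

lemma laguerre_eq_sum (lam : ℝ) (l : ℕ) :
    laguerre lam l = fun t => ∑ j ∈ range (l + 1), laguerreCoeff lam l j * t ^ j :=
  rfl

lemma laguerreCoeff_succ_mul {lam : ℝ} (hlam : -1 < lam) {l j : ℕ} (hj : j < l) :
    laguerreCoeff lam l (j + 1) * ((j + 1 : ℕ) * (lam + (j + 1 : ℕ))) =
      laguerreCoeff lam l j * (j - l) := by
  have hpos : 0 < lam + j + 1 := by linarith [j.cast_nonneg (α := ℝ)]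
  have hΓ : Real.Gamma (lam + (j + 1 : ℕ) + 1) = (lam + j + 1) * Real.Gamma (lam + j + 1) := by
    rw [← Real.Gamma_add_one hpos.ne']; push_cast; ring_nf
  have hfac : ((l - j).factorial : ℝ) = (l - j) * (l - (j + 1)).factorial := by
    obtain ⟨k, rfl⟩ := Nat.exists_eq_add_of_lt hj
    rw [show j + k + 1 - j = k + 1 by omega, show j + k + 1 - (j + 1) = k by omega,
      Nat.factorial_succ]
    push_cast; ring
  have hΓpos := Real.Gamma_pos_of_pos hpos
  have hlj : (l : ℝ) - j ≠ 0 := sub_ne_zero.2 (by exact_mod_cast hj.ne')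
  unfold laguerreCoeff
  rw [hΓ, hfac, Nat.factorial_succ, pow_succ]
  push_cast
  field_simp
  ring

noncomputable def eulerOp (f : ℝ → ℝ) (t : ℝ) : ℝ := t * deriv f t

lemma eulerOp_sum_pow (s : Finset ℕ) (b : ℕ → ℝ) :
    eulerOp (fun t => ∑ j ∈ s, b j * t ^ j) = fun t => ∑ j ∈ s, j * b j * t ^ j := by
  funext t
  have hd : HasDerivAt (fun t => ∑ j ∈ s, b j * t ^ j) (∑ j ∈ s, b j * (j * t ^ (j - 1))) t :=
    HasDerivAt.fun_sum fun j _ => (hasDerivAt_pow j t).const_mul (b j)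
  rw [eulerOp, hd.deriv, mul_sum]
  refine sum_congr rfl fun j _ => ?_
  rcases j with _ | j
  · simp
  · simp only [Nat.add_sub_cancel, pow_succ]; ring

lemma eulerOp_eulerOp {f : ℝ → ℝ} {t : ℝ} (hf : DifferentiableAt ℝ (deriv f) t) :
    eulerOp (eulerOp f) t = t ^ 2 * deriv (deriv f) t + eulerOp f t := by
  have h : HasDerivAt (eulerOp f) (1 * deriv f t + t * deriv (deriv f) t) t :=
    (hasDerivAt_id' t).mul hf.hasDerivAt
  rw [eulerOp, h.deriv, eulerOp]
  ring

lemma eulerOp_mul {f g : ℝ → ℝ} {t : ℝ} (hf : DifferentiableAt ℝ f t)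
    (hg : DifferentiableAt ℝ g t) :
    eulerOp (fun s => f s * g s) t = eulerOp f t * g t + f t * eulerOp g t := by
  simp only [eulerOp, deriv_fun_mul hf hg]
  ring

lemma eulerOp_const_mul_add_const_mul {f g : ℝ → ℝ} {t : ℝ} (α β : ℝ)
    (hf : DifferentiableAt ℝ f t) (hg : DifferentiableAt ℝ g t) :
    eulerOp (fun s => α * f s + β * g s) t = α * eulerOp f t + β * eulerOp g t := by
  have h : HasDerivAt (fun s => α * f s + β * g s) (α * deriv f t + β * deriv g t) t :=
    (hf.hasDerivAt.const_mul α).add (hg.hasDerivAt.const_mul β)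
  rw [eulerOp, h.deriv, eulerOp, eulerOp]
  ring

lemma eulerOp_rpow {r : ℝ} (hr : r ≠ 0) (p : ℝ) : eulerOp (fun s => s ^ p) r = p * r ^ p := by
  rw [eulerOp, Real.deriv_rpow_const, Real.rpow_sub_one hr]
  field_simp

lemma eulerOp_comp_const_mul_rpow {G : ℝ → ℝ} {c p r : ℝ} (hr : r ≠ 0)
    (hG : DifferentiableAt ℝ G (c * r ^ p)) :
    eulerOp (fun s => G (c * s ^ p)) r = p * eulerOp G (c * r ^ p) := by
  have h : HasDerivAt (fun s => G (c * s ^ p)) (deriv G (c * r ^ p) * (c * (p * r ^ (p - 1)))) r :=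
    hG.hasDerivAt.comp r ((Real.hasDerivAt_rpow_const (Or.inl hr)).const_mul c)
  rw [eulerOp, h.deriv, eulerOp, Real.rpow_sub_one hr]
  field_simp

lemma differentiableAt_comp_const_mul_rpow {G : ℝ → ℝ} {c p r : ℝ} (hr : r ≠ 0)
    (hG : DifferentiableAt ℝ G (c * r ^ p)) :
    DifferentiableAt ℝ (fun s => G (c * s ^ p)) r :=
  hG.comp r ((differentiableAt_id.rpow_const (Or.inl hr)).const_mul c)

lemma differentiableAt_rpow_mul_comp {G : ℝ → ℝ} {μ a c r : ℝ} (hr : r ≠ 0)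
    (hG : DifferentiableAt ℝ G (c * r ^ (-a))) :
    DifferentiableAt ℝ (fun s => s ^ (-μ) * G (c * s ^ (-a))) r :=
  (differentiableAt_id.rpow_const (Or.inl hr)).mul (differentiableAt_comp_const_mul_rpow hr hG)

lemma eulerOp_rpow_mul_comp {G : ℝ → ℝ} {μ a c r : ℝ} (hr : r ≠ 0)
    (hG : DifferentiableAt ℝ G (c * r ^ (-a))) :
    eulerOp (fun s => s ^ (-μ) * G (c * s ^ (-a))) r =
      r ^ (-μ) * (-μ * G (c * r ^ (-a)) + -a * eulerOp G (c * r ^ (-a))) := by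
  rw [eulerOp_mul (f := fun s => s ^ (-μ)) (differentiableAt_id.rpow_const (Or.inl hr))
      (differentiableAt_comp_const_mul_rpow hr hG),
    eulerOp_rpow hr, eulerOp_comp_const_mul_rpow hr hG]
  ring

/-- The left side is `(ϑ - m)(ϑ + ν + m) F` for `ϑ = r d/dr`. -/
theorem euler_quadratic_rpow_mul_comp {G : ℝ → ℝ} (hG : Differentiable ℝ G)
    (hθG : Differentiable ℝ (eulerOp G)) (ν m a c : ℝ) {r : ℝ} (hr : 0 < r) :
    r ^ 2 * deriv (deriv fun s => s ^ (-(ν + m)) * G (c * s ^ (-a))) r +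
        (ν + 1) * r * deriv (fun s => s ^ (-(ν + m)) * G (c * s ^ (-a))) r -
        m * (ν + m) * (r ^ (-(ν + m)) * G (c * r ^ (-a))) =
      r ^ (-(ν + m)) * (a ^ 2 * eulerOp (eulerOp G) (c * r ^ (-a)) +
        a * (ν + 2 * m) * eulerOp G (c * r ^ (-a))) := by
  set F : ℝ → ℝ := fun s => s ^ (-(ν + m)) * G (c * s ^ (-a))
  set t := c * r ^ (-a)
  set H : ℝ → ℝ := fun t => -(ν + m) * G t + -a * eulerOp G t
  have hH : Differentiable ℝ H := fun t => ((hG t).const_mul _).add ((hθG t).const_mul _)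
  have hθF : eulerOp F =ᶠ[𝓝 r] fun s => s ^ (-(ν + m)) * H (c * s ^ (-a)) := by
    filter_upwards [Ioi_mem_nhds hr] with s hs
    exact eulerOp_rpow_mul_comp (ne_of_gt hs) (hG _)
  have hdF : DifferentiableAt ℝ (deriv F) r := by
    have hinv : deriv F =ᶠ[𝓝 r] fun s => s⁻¹ * (s ^ (-(ν + m)) * H (c * s ^ (-a))) := by
      filter_upwards [hθF, Ioi_mem_nhds hr] with s hθ hs
      rw [← hθ, eulerOp, inv_mul_cancel_left₀ (ne_of_gt hs)]
    exact ((differentiableAt_inv hr.ne').mul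
      (differentiableAt_rpow_mul_comp hr.ne' (hH _))).congr_of_eventuallyEq hinv
  have hθθF : eulerOp (eulerOp F) r = r ^ (-(ν + m)) * (-(ν + m) * H t + -a * eulerOp H t) := by
    rw [eulerOp, hθF.deriv_eq, ← eulerOp]
    exact eulerOp_rpow_mul_comp hr.ne' (hH _)
  have hθH : eulerOp H t = -(ν + m) * eulerOp G t + -a * eulerOp (eulerOp G) t :=
    eulerOp_const_mul_add_const_mul _ _ (hG t) (hθG t)
  have hθθF_deriv : eulerOp (eulerOp F) r = r ^ 2 * deriv (deriv F) r + r * deriv F r :=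
    eulerOp_eulerOp hdF
  have hθF_at : r * deriv F r = r ^ (-(ν + m)) * H t := hθF.self_of_nhds
  have hHt : H t = -(ν + m) * G t + -a * eulerOp G t := rfl
  linear_combination hθθF - hθθF_deriv + ν * hθF_at + r ^ (-(ν + m)) * (-m) * hHt +
    (-a * r ^ (-(ν + m))) * hθH

lemma contDiff_laguerre (lam : ℝ) (l : ℕ) {n : WithTop ℕ∞} : ContDiff ℝ n (laguerre lam l) := by
  rw [laguerre_eq_sum]
  fun_prop

theorem laguerre_euler_ode {lam : ℝ} (hlam : -1 < lam) (l : ℕ) (t : ℝ) :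
    eulerOp (eulerOp (laguerre lam l)) t + lam * eulerOp (laguerre lam l) t =
      t * (eulerOp (laguerre lam l) t - l * laguerre lam l t) := by
  simp only [laguerre_eq_sum, eulerOp_sum_pow, ← mul_assoc]
  calc _ = ∑ j ∈ range (l + 1), laguerreCoeff lam l j * (j * (lam + j)) * t ^ j := by
        rw [mul_sum, ← sum_add_distrib]
        exact sum_congr rfl fun j _ => by ring
    _ = ∑ j ∈ range (l + 1), laguerreCoeff lam l j * (j - l) * t ^ (j + 1) := by
        rw [sum_range_succ', sum_range_succ]
        simp only [CharP.cast_eq_zero, zero_mul, mul_zero, sub_self, add_zero]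
        refine sum_congr rfl fun j hj => ?_
        rw [← laguerreCoeff_succ_mul hlam (mem_range.1 hj)]
    _ = _ := by
        simp only [mul_sum, ← sum_sub_distrib]
        exact sum_congr rfl fun j _ => by ring

noncomputable def laguerreFun (lam : ℝ) (l : ℕ) (t : ℝ) : ℝ :=
  laguerre lam l t * Real.exp (-t / 2)

lemma deriv_mul_exp_neg_half {f : ℝ → ℝ} (hf : Differentiable ℝ f) (t : ℝ) :
    deriv (fun t => f t * Real.exp (-t / 2)) t = (deriv f t - f t / 2) * Real.exp (-t / 2) := by
  have hexp : HasDerivAt (fun t => Real.exp (-t / 2)) (Real.exp (-t / 2) * (-1 / 2)) t :=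
    ((hasDerivAt_neg' t).div_const 2).exp
  rw [((hf t).hasDerivAt.fun_mul hexp).deriv]
  ring

lemma contDiff_laguerreFun (lam : ℝ) (l : ℕ) {n : WithTop ℕ∞} :
    ContDiff ℝ n (laguerreFun lam l) :=
  (contDiff_laguerre lam l).mul (by fun_prop)

theorem laguerreFun_euler_ode {lam : ℝ} (hlam : -1 < lam) (l : ℕ) (t : ℝ) :
    eulerOp (eulerOp (laguerreFun lam l)) t + lam * eulerOp (laguerreFun lam l) t =
      t * (t / 4 - l - (lam + 1) / 2) * laguerreFun lam l t := by
  have hL : Differentiable ℝ (laguerre lam l) :=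
    (contDiff_laguerre lam l (n := 1)).differentiable one_ne_zero
  have hL' : Differentiable ℝ (deriv (laguerre lam l)) :=
    (contDiff_laguerre lam l).differentiable_deriv_two
  have hG' : deriv (laguerreFun lam l) =
      fun t => (deriv (laguerre lam l) t - laguerre lam l t / 2) * Real.exp (-t / 2) :=
    funext (deriv_mul_exp_neg_half hL)
  have hG'' : deriv (deriv (laguerreFun lam l)) t =
      (deriv (deriv (laguerre lam l)) t - deriv (laguerre lam l) t + laguerre lam l t / 4) *
        Real.exp (-t / 2) := by
    have hK : Differentiable ℝ fun t => deriv (laguerre lam l) t - laguerre lam l t / 2 :=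
      hL'.sub (hL.div_const 2)
    rw [hG', deriv_mul_exp_neg_half hK t,
      deriv_fun_sub (hL' t) ((hL t).div_const 2), deriv_div_const]
    ring
  have hode := laguerre_euler_ode hlam l t
  rw [eulerOp_eulerOp (hL' t)] at hode
  rw [eulerOp_eulerOp ((contDiff_laguerreFun lam l).differentiable_deriv_two t), hG'']
  simp only [eulerOp, hG', laguerreFun] at hode ⊢
  linear_combination Real.exp (-t / 2) * hode

noncomputable def radialLaguerreFun (ν a m : ℝ) (l : ℕ) (r : ℝ) : ℝ :=
  r ^ (-(ν + m)) * laguerreFun ((ν + 2 * m) / a) l ((2 / a) * r ^ (-a))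

theorem radialLaguerreFun_eigen {ν a m : ℝ} (ha : a ≠ 0) (hlam : -1 < (ν + 2 * m) / a)
    (l : ℕ) {r : ℝ} (hr : 0 < r) :
    r ^ (-a) * radialLaguerreFun ν a m l r -
        r ^ a * (r ^ 2 * deriv (deriv (radialLaguerreFun ν a m l)) r +
          (ν + 1) * r * deriv (radialLaguerreFun ν a m l) r -
          m * (ν + m) * radialLaguerreFun ν a m l r) =
      -a * (-((ν + 2 * m) / a) - 2 * l - 1) * radialLaguerreFun ν a m l r := by
  set lam := (ν + 2 * m) / a
  set G := laguerreFun lam l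
  have hG : ContDiff ℝ 2 G := contDiff_laguerreFun lam l
  have hθG : Differentiable ℝ (eulerOp G) := differentiable_id.mul hG.differentiable_deriv_two
  have hrt : a * (r ^ a * (2 / a * r ^ (-a))) = 2 := by
    rw [Real.rpow_neg hr.le]
    field_simp [(Real.rpow_pos_of_pos hr a).ne']
  have hrt' : 2 * r ^ (-a) = a * (2 / a * r ^ (-a)) := by
    field_simp
  have ha_lam : a * lam = ν + 2 * m := mul_div_cancel₀ _ ha
  have hode := laguerreFun_euler_ode hlam l (2 / a * r ^ (-a))
  have hEuler := euler_quadratic_rpow_mul_comp (hG.differentiable two_ne_zero) hθG ν m a (2 / a) hr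
  set t := 2 / a * r ^ (-a)
  change r ^ (-a) * (r ^ (-(ν + m)) * G t) - r ^ a * (_ - _ * (r ^ (-(ν + m)) * G t)) = _
  rw [show radialLaguerreFun ν a m l = fun s => s ^ (-(ν + m)) * G (2 / a * s ^ (-a)) from rfl,
    hEuler]
  linear_combination (r ^ a * r ^ (-(ν + m)) * a * eulerOp G t) * ha_lam -
    (r ^ a * r ^ (-(ν + m)) * a ^ 2) * hode -
    (r ^ (-(ν + m)) * a * (t / 4 - l - (lam + 1) / 2) * G t) * hrt +
    (r ^ (-(ν + m)) * G t / 2) * hrt'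

lemma deriv_ofReal_comp (f : ℝ → ℝ) (x : ℝ) : deriv (fun y => (f y : ℂ)) x = deriv f x := by
  by_cases hf : DifferentiableAt ℝ f x
  · exact hf.hasDerivAt.ofReal_comp.deriv
  · rw [deriv_zero_of_not_differentiableAt hf, deriv_zero_of_not_differentiableAt,
      Complex.ofReal_zero]
    exact fun h => hf (Complex.reCLM.differentiableAt.comp x h)

lemma deriv_const_mul_ofReal_comp (C : ℂ) (f : ℝ → ℝ) :
    deriv (fun y => C * (f y : ℂ)) = fun y => C * ((deriv f y : ℝ) : ℂ) := by
  rw [deriv_const_mul_field']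
  simp only [deriv_ofReal_comp]

/-- `f⁻_l` is an eigenfunction of `π_{-a}(𝐤) = (1/(-a))(r^{-a} - r^a (ϑ - m)(ϑ + ν + m))`
with eigenvalue `λ_{k,-a,m} - 2l - 1 = -λ - 2l - 1`, where `λ = (ν + 2m)/a`. -/
theorem laguerreFunNeg_eigenfunction (ν a : ℝ) (ha : 0 < a) (m : ℕ)
    (hlam : -1 < (ν + 2 * m) / a) (l : ℕ) (r : ℝ) (hr : 0 < r) :
    (1 / (-a : ℂ)) *
        (((r ^ (-a) : ℝ) : ℂ) * laguerreFunNeg ν a m l r -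
          ((r ^ a : ℝ) : ℂ) *
            ((r : ℂ) ^ 2 * deriv (deriv (laguerreFunNeg ν a m l)) r +
              ((ν : ℂ) + 1) * (r : ℂ) * deriv (laguerreFunNeg ν a m l) r -
              (m : ℂ) * ((ν : ℂ) + (m : ℂ)) * laguerreFunNeg ν a m l r))
      = (-(((ν + 2 * m) / a : ℝ) : ℂ) - 2 * l - 1) * laguerreFunNeg ν a m l r := by
  set C : ℝ := Real.sqrt ((2 : ℝ) ^ ((ν + 2 * m) / a + 1) * l.factorial /
    (a ^ ((ν + 2 * m) / a) * Real.Gamma ((ν + 2 * m) / a + l + 1))) with hC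
  have hf : laguerreFunNeg ν a m l = fun s => (C : ℂ) * (radialLaguerreFun ν a m l s : ℂ) := by
    funext s
    rw [laguerreFunNeg, ← hC, radialLaguerreFun, laguerreFun, ← Complex.ofReal_mul,
      show -(1 / a) * s ^ (-a) = -(2 / a * s ^ (-a)) / 2 by ring]
    ring_nf
  have heigen := congrArg (fun x : ℝ => (x : ℂ)) (radialLaguerreFun_eigen ha.ne' hlam l hr)
  rw [hf, deriv_const_mul_ofReal_comp, deriv_const_mul_ofReal_comp]
  push_cast at heigen ⊢
  have ha' : (a : ℂ) ≠ 0 := Complex.ofReal_ne_zero.2 ha.ne'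
  rw [one_div, inv_mul_eq_iff_eq_mul₀ (neg_ne_zero.2 ha')]
  linear_combination (C : ℂ) * heigen
end
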